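/- arXiv:2307.10489 — 5 statements merged into one kernel-verified Lean document; each statement's English description precedes it below -/
import Mathlib

section
/- Suppose W is three times continuously differentiable, U ⊆ ℝ^K is open, φ : U → ℝ^N is continuously differentiable, ∇_z W(φ(u), u) = 0 for all u ∈ U, and ∇²_zz W(φ(u₀), u₀) is invertible at u₀ ∈ U. Then the reduced potential W*(u) := W(φ(u), u) is twice differentiable at u₀ and its Hessian equals the control Hessian: ∇²W*(u₀) = G(φ(u₀), u₀) = ∇²_uu W − ∇²_zu W (∇²_zz W)⁻¹ ∇²_uz W, evaluated at (φ(u₀), u₀). -/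
/-!
Differentiating the equilibrium identity `∇_z W (φ u, u) = 0` gives
`∇²_zz W ∘ Dφ + ∇²_uz W = 0`, so `Dφ = -(∇²_zz W)⁻¹ ∇²_uz W`. Since `∇_z W` vanishes along the
branch, the chain rule (envelope theorem) gives `∇W* u = ∇_u W (φ u, u)` near `u₀`;
differentiating once more and substituting `Dφ` yields the Schur complement.
-/

open ContinuousLinearMap InnerProductSpace Filter Topology

section Graph

variable {𝕜 E F G G' : Type*} [NontriviallyNormedField 𝕜]
  [NormedAddCommGroup E] [NormedSpace 𝕜 E] [NormedAddCommGroup F] [NormedSpace 𝕜 F]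
  [NormedAddCommGroup G] [NormedSpace 𝕜 G] [NormedAddCommGroup G'] [NormedSpace 𝕜 G']

theorem DifferentiableAt.fderiv_comp_prodMk_left {f : E × F → G} {p : E × F}
    (hf : DifferentiableAt 𝕜 f p) :
    fderiv 𝕜 (fun x => f (x, p.2)) p.1 = fderiv 𝕜 f p ∘L inl 𝕜 E F :=
  (hf.hasFDerivAt.comp p.1 (hasFDerivAt_prodMk_left p.1 p.2)).fderiv

theorem DifferentiableAt.fderiv_comp_prodMk_right {f : E × F → G} {p : E × F}
    (hf : DifferentiableAt 𝕜 f p) :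
    fderiv 𝕜 (fun y => f (p.1, y)) p.2 = fderiv 𝕜 f p ∘L inr 𝕜 E F :=
  (hf.hasFDerivAt.comp p.2 (hasFDerivAt_prodMk_right p.1 p.2)).fderiv

variable {φ : F → E} {φ' : F →L[𝕜] E} {u : F}

theorem HasFDerivAt.comp_graph {g : E × F → G} {g' : E × F →L[𝕜] G}
    (hg : HasFDerivAt g g' (φ u, u)) (hφ : HasFDerivAt φ φ' u) :
    HasFDerivAt (fun v => g (φ v, v)) ((g' ∘L inl 𝕜 E F) ∘L φ' + g' ∘L inr 𝕜 E F) u := by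
  refine (HasFDerivAt.comp (f := fun v => (φ v, v)) u hg
    (hφ.prodMk (hasFDerivAt_id u))).congr_fderiv ?_
  ext v
  rw [comp_apply, ← comp_inl_add_comp_inr g']
  rfl

theorem HasFDerivAt.eq_neg_symm_comp_of_eventually_graph_eq_zero {g : E × F → G}
    {g' : E × F →L[𝕜] G} {H : E ≃L[𝕜] G} (hg : HasFDerivAt g g' (φ u, u))
    (hφ : HasFDerivAt φ φ' u) (hzero : ∀ᶠ v in 𝓝 u, g (φ v, v) = 0)
    (hH : (H : E →L[𝕜] G) = g' ∘L inl 𝕜 E F) :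
    φ' = -((H.symm : G →L[𝕜] E) ∘L g' ∘L inr 𝕜 E F) := by
  have hlin : (H : E →L[𝕜] G) ∘L φ' + g' ∘L inr 𝕜 E F = 0 := by
    rw [hH]
    exact (hg.comp_graph hφ).unique ((hasFDerivAt_const 0 u).congr_of_eventuallyEq hzero)
  ext v
  have hv := congr($hlin v)
  simp only [add_apply, comp_apply, ContinuousLinearEquiv.coe_coe, zero_apply] at hv
  rw [← H.symm_apply_apply (φ' v), eq_neg_of_add_eq_zero_left hv, map_neg]
  rfl

theorem fderiv_comp_graph_eq_sub_comp_symm {g : E × F → G} {h : E × F → G'} {H : E ≃L[𝕜] G}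
    (hg : DifferentiableAt 𝕜 g (φ u, u)) (hh : DifferentiableAt 𝕜 h (φ u, u))
    (hφ : DifferentiableAt 𝕜 φ u) (hzero : ∀ᶠ v in 𝓝 u, g (φ v, v) = 0)
    (hH : (H : E →L[𝕜] G) = fderiv 𝕜 (fun z => g (z, u)) (φ u)) :
    fderiv 𝕜 (fun v => h (φ v, v)) u =
      fderiv 𝕜 (fun v => h (φ u, v)) u -
        fderiv 𝕜 (fun z => h (z, u)) (φ u) ∘L
          ((H.symm : G →L[𝕜] E) ∘L fderiv 𝕜 (fun v => g (φ u, v)) u) := by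
  rw [hg.fderiv_comp_prodMk_left] at hH
  have hφ' := hg.hasFDerivAt.eq_neg_symm_comp_of_eventually_graph_eq_zero hφ.hasFDerivAt hzero hH
  rw [(hh.hasFDerivAt.comp_graph hφ.hasFDerivAt).fderiv, hφ', hh.fderiv_comp_prodMk_left,
    hh.fderiv_comp_prodMk_right, hg.fderiv_comp_prodMk_right, comp_neg, neg_add_eq_sub]

end Graph

section PartialGradient

variable {Z U : Type*} [NormedAddCommGroup Z] [InnerProductSpace ℝ Z]
  [NormedAddCommGroup U] [InnerProductSpace ℝ U]

noncomputable def gradientFst [CompleteSpace Z] (f : Z × U → ℝ) (p : Z × U) : Z :=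
  gradient (fun z => f (z, p.2)) p.1

noncomputable def gradientSnd [CompleteSpace U] (f : Z × U → ℝ) (p : Z × U) : U :=
  gradient (fun u => f (p.1, u)) p.2

variable {f : Z × U → ℝ}

theorem gradientFst_eq [CompleteSpace Z] {p : Z × U} (hf : DifferentiableAt ℝ f p) :
    gradientFst f p = (toDual ℝ Z).symm (fderiv ℝ f p ∘L inl ℝ Z U) := by
  rw [gradientFst, gradient, hf.fderiv_comp_prodMk_left]

theorem gradientSnd_eq [CompleteSpace U] {p : Z × U} (hf : DifferentiableAt ℝ f p) :
    gradientSnd f p = (toDual ℝ U).symm (fderiv ℝ f p ∘L inr ℝ Z U) := by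
  rw [gradientSnd, gradient, hf.fderiv_comp_prodMk_right]

variable {m n : WithTop ℕ∞}

theorem ContDiff.gradientFst [CompleteSpace Z] (hf : ContDiff ℝ n f) (hmn : m + 1 ≤ n) :
    ContDiff ℝ m (gradientFst f) := by
  have hdiff := (hf.of_le (le_add_self.trans hmn)).differentiable one_ne_zero
  rw [show _root_.gradientFst f = _ from funext fun p => gradientFst_eq (hdiff p)]
  exact (toDual ℝ Z).symm.contDiff.comp ((hf.fderiv_right hmn).clm_comp contDiff_const)

theorem ContDiff.gradientSnd [CompleteSpace U] (hf : ContDiff ℝ n f) (hmn : m + 1 ≤ n) :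
    ContDiff ℝ m (gradientSnd f) := by
  have hdiff := (hf.of_le (le_add_self.trans hmn)).differentiable one_ne_zero
  rw [show _root_.gradientSnd f = _ from funext fun p => gradientSnd_eq (hdiff p)]
  exact (toDual ℝ U).symm.contDiff.comp ((hf.fderiv_right hmn).clm_comp contDiff_const)

theorem gradient_comp_graph_eq_gradientSnd [CompleteSpace Z] [CompleteSpace U] {φ : U → Z} {u : U}
    (hf : DifferentiableAt ℝ f (φ u, u)) (hφ : DifferentiableAt ℝ φ u)
    (hcrit : gradientFst f (φ u, u) = 0) :
    gradient (fun v => f (φ v, v)) u = gradientSnd f (φ u, u) := by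
  have hfz : fderiv ℝ f (φ u, u) ∘L inl ℝ Z U = 0 := by
    simpa [gradientFst_eq hf] using hcrit
  rw [gradient, (hf.hasFDerivAt.comp_graph hφ.hasFDerivAt).fderiv, hfz, zero_comp, zero_add,
    gradientSnd_eq hf]

end PartialGradient

/-- The Hessian of the reduced potential is the control Hessian
(Schur complement). If `W` is C³, `φ` is a C¹ branch of equilibria on an open
set `U`, and `∇²_zz W (φ u₀, u₀)` is invertible (given as the equivalence `H`),
then the reduced potential `W* u = W (φ u, u)` is twice differentiable at `u₀`
and `∇²W*(u₀) = ∇²_uu W - ∇²_zu W ∘ (∇²_zz W)⁻¹ ∘ ∇²_uz W` at `(φ u₀, u₀)`. -/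
theorem reduced_potential_hessian (N K : ℕ)
    (W : EuclideanSpace ℝ (Fin N) × EuclideanSpace ℝ (Fin K) → ℝ)
    (hW : ContDiff ℝ 3 W)
    (U : Set (EuclideanSpace ℝ (Fin K))) (hU : IsOpen U)
    (u₀ : EuclideanSpace ℝ (Fin K)) (hu₀ : u₀ ∈ U)
    (φ : EuclideanSpace ℝ (Fin K) → EuclideanSpace ℝ (Fin N))
    (hφ : ContDiffOn ℝ 1 φ U)
    (heq : ∀ u ∈ U, gradient (fun z => W (z, u)) (φ u) = 0)
    (H : EuclideanSpace ℝ (Fin N) ≃L[ℝ] EuclideanSpace ℝ (Fin N))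
    (hH : (H : EuclideanSpace ℝ (Fin N) →L[ℝ] EuclideanSpace ℝ (Fin N))
      = fderiv ℝ (fun z => gradient (fun z' => W (z', u₀)) z) (φ u₀)) :
    DifferentiableAt ℝ (fun u => W (φ u, u)) u₀ ∧
    DifferentiableAt ℝ (fun u => gradient (fun u' => W (φ u', u')) u) u₀ ∧
    fderiv ℝ (fun u => gradient (fun u' => W (φ u', u')) u) u₀ =
      fderiv ℝ (fun u => gradient (fun u' => W (φ u₀, u')) u) u₀ -
      (fderiv ℝ (fun z => gradient (fun u' => W (z, u')) u₀) (φ u₀)).comp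
        ((H.symm : EuclideanSpace ℝ (Fin N) →L[ℝ] EuclideanSpace ℝ (Fin N)).comp
          (fderiv ℝ (fun u => gradient (fun z' => W (z', u)) (φ u₀)) u₀)) := by
  have hWd : Differentiable ℝ W := hW.differentiable (by norm_num)
  have hgz : Differentiable ℝ (gradientFst W) :=
    (hW.gradientFst (m := 1) (by norm_num)).differentiable one_ne_zero
  have hgu : Differentiable ℝ (gradientSnd W) :=
    (hW.gradientSnd (m := 1) (by norm_num)).differentiable one_ne_zero
  have hU₀ : U ∈ 𝓝 u₀ := hU.mem_nhds hu₀
  have hφd : ∀ u ∈ U, DifferentiableAt ℝ φ u := fun u hu =>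
    (hφ.differentiableOn one_ne_zero).differentiableAt (hU.mem_nhds hu)
  have hreduced : (fun u => gradient (fun u' => W (φ u', u')) u) =ᶠ[𝓝 u₀]
      fun u => gradientSnd W (φ u, u) :=
    eventually_of_mem hU₀ fun u hu =>
      gradient_comp_graph_eq_gradientSnd (hWd _) (hφd u hu) (heq u hu)
  have hgraph : DifferentiableAt ℝ (fun u => (φ u, u)) u₀ :=
    (hφd u₀ hu₀).prodMk differentiableAt_id
  refine ⟨(hWd _).comp u₀ hgraph, hreduced.differentiableAt_iff.mpr ((hgu _).comp u₀ hgraph), ?_⟩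
  rw [hreduced.fderiv_eq]
  exact fderiv_comp_graph_eq_sub_comp_symm (g := gradientFst W) (h := gradientSnd W) (hgz _)
    (hgu _) (hφd u₀ hu₀) (eventually_of_mem hU₀ heq) hH
end

section
/- Let u ∈ ℝ² with u ≠ u_crit, so that L_u = ‖u − u_crit‖ > 0. Then α ∈ ℝ is an equilibrium of the pendulum potential, i.e. ∂W/∂α (α, u) = 0, if and only if u − u_crit = L_u·n_α or u − u_crit = −L_u·n_α (the control point is aligned or anti-aligned with the pendulum direction). -/
open Real

/-- The pendulum potential
`W(α, u) = ½ m g L₀ sin α + ½ k_c ‖u - L₀ n_α‖²`, written in coordinates. -/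
noncomputable def pendW (m g L₀ kc : ℝ) (α : ℝ) (u : ℝ × ℝ) : ℝ :=
  (1 / 2) * m * g * L₀ * sin α +
    (1 / 2) * kc * ((u.1 - L₀ * cos α) ^ 2 + (u.2 - L₀ * sin α) ^ 2)

/-- The pendulum direction `n_α = (cos α, sin α)`. -/
noncomputable def pendN (α : ℝ) : ℝ × ℝ := (cos α, sin α)

/-- The critical control point `u_crit = (0, m g / (2 k_c))`. -/
noncomputable def pendUcrit (m g kc : ℝ) : ℝ × ℝ := (0, m * g / (2 * kc))

/-- The control length `L_u = ‖u - u_crit‖`. -/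
noncomputable def pendLu (m g kc : ℝ) (u : ℝ × ℝ) : ℝ :=
  Real.sqrt (u.1 ^ 2 + (u.2 - m * g / (2 * kc)) ^ 2)

/-!
The derivative of the potential is `∂W/∂α = k_c L₀ (v × n_α)` with `v = u - u_crit`: the choice of
`u_crit` is exactly what absorbs the gravity term `½ m g L₀ cos α`. So `α` is an equilibrium iff
`v` is parallel to the unit vector `n_α`, i.e. `v = ±‖v‖ n_α`.
-/

theorem cross_eq_zero_iff_eq_pm_norm_smul {x y c s : ℝ} (hcs : c ^ 2 + s ^ 2 = 1) :
    x * s - y * c = 0 ↔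
      (x, y) = √(x ^ 2 + y ^ 2) • (c, s) ∨ (x, y) = -(√(x ^ 2 + y ^ 2) • (c, s)) := by
  simp only [Prod.smul_mk, Prod.neg_mk, Prod.mk.injEq, smul_eq_mul]
  constructor
  · intro hcross
    set r := x * c + y * s
    have hx : x = r * c := by linear_combination s * hcross - x * hcs
    have hy : y = r * s := by linear_combination (-c) * hcross - y * hcs
    have hnorm : √(x ^ 2 + y ^ 2) = |r| := by
      rw [← sqrt_sq_eq_abs]
      congr 1
      linear_combination (x + r * c) * hx + (y + r * s) * hy + r ^ 2 * hcs
    rw [hnorm]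
    rcases abs_choice r with hr | hr <;> rw [hr]
    · exact Or.inl ⟨hx, hy⟩
    · exact Or.inr ⟨by linarith, by linarith⟩
  · rintro (⟨hx, hy⟩ | ⟨hx, hy⟩) <;> linear_combination s * hx - c * hy

theorem pendLu_eq_sqrt (m g kc : ℝ) (u : ℝ × ℝ) :
    pendLu m g kc u =
      √((u - pendUcrit m g kc).1 ^ 2 + (u - pendUcrit m g kc).2 ^ 2) := by
  simp [pendLu, pendUcrit]

theorem pendLu_pos {m g kc : ℝ} {u : ℝ × ℝ} (hu : u ≠ pendUcrit m g kc) :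
    0 < pendLu m g kc u := by
  rw [pendLu_eq_sqrt, sqrt_pos]
  have hv : u - pendUcrit m g kc ≠ 0 := sub_ne_zero.mpr hu
  rw [Ne, Prod.ext_iff, not_and_or] at hv
  rcases hv with hv | hv
  · exact add_pos_of_pos_of_nonneg (sq_pos_of_ne_zero hv) (sq_nonneg _)
  · exact add_pos_of_nonneg_of_pos (sq_nonneg _) (sq_pos_of_ne_zero hv)

theorem hasDerivAt_pendW (m g L₀ kc : ℝ) (u : ℝ × ℝ) (α : ℝ) :
    HasDerivAt (fun β => pendW m g L₀ kc β u)
      ((1 / 2) * m * g * L₀ * cos α +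
        kc * L₀ * ((u.1 - L₀ * cos α) * sin α - (u.2 - L₀ * sin α) * cos α)) α := by
  unfold pendW
  have hx : HasDerivAt (fun β => u.1 - L₀ * cos β) (L₀ * sin α) α := by
    simpa using ((hasDerivAt_cos α).const_mul L₀).const_sub u.1
  have hy : HasDerivAt (fun β => u.2 - L₀ * sin β) (-(L₀ * cos α)) α := by
    simpa using ((hasDerivAt_sin α).const_mul L₀).const_sub u.2
  exact (((hasDerivAt_sin α).const_mul ((1 / 2) * m * g * L₀)).add
    (((hx.pow 2).add (hy.pow 2)).const_mul ((1 / 2) * kc))).congr_deriv (by norm_num; ring)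

theorem deriv_pendW {kc : ℝ} (hk : kc ≠ 0) (m g L₀ : ℝ) (u : ℝ × ℝ) (α : ℝ) :
    deriv (fun β => pendW m g L₀ kc β u) α =
      kc * L₀ * ((u - pendUcrit m g kc).1 * sin α - (u - pendUcrit m g kc).2 * cos α) := by
  rw [(hasDerivAt_pendW m g L₀ kc u α).deriv]
  simp only [pendUcrit, Prod.fst_sub, Prod.snd_sub, sub_zero]
  field_simp
  ring

theorem pendulum_equilibrium_iff_aligned_general (m g L₀ kc : ℝ)
    (hL : 0 < L₀) (hk : 0 < kc)
    (u : ℝ × ℝ) (hu : u ≠ pendUcrit m g kc) (α : ℝ) :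
    0 < pendLu m g kc u ∧
    (deriv (fun β => pendW m g L₀ kc β u) α = 0 ↔
      u - pendUcrit m g kc = pendLu m g kc u • pendN α ∨
      u - pendUcrit m g kc = -(pendLu m g kc u • pendN α)) := by
  refine ⟨pendLu_pos hu, ?_⟩
  rw [deriv_pendW hk.ne', mul_eq_zero, or_iff_right (by positivity), pendLu_eq_sqrt]
  exact cross_eq_zero_iff_eq_pm_norm_smul (cos_sq_add_sin_sq α)

/-- For `u ≠ u_crit` (so that `L_u > 0`), `α` is an equilibrium
(`∂W/∂α (α, u) = 0`) iff `u - u_crit = L_u n_α` or `u - u_crit = -L_u n_α`. -/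
theorem pendulum_equilibrium_iff_aligned (m g L₀ kc : ℝ)
    (hm : 0 < m) (hg : 0 < g) (hL : 0 < L₀) (hk : 0 < kc)
    (u : ℝ × ℝ) (hu : u ≠ pendUcrit m g kc) (α : ℝ) :
    0 < pendLu m g kc u ∧
    (deriv (fun β => pendW m g L₀ kc β u) α = 0 ↔
      u - pendUcrit m g kc = pendLu m g kc u • pendN α ∨
      u - pendUcrit m g kc = -(pendLu m g kc u • pendN α)) :=
  pendulum_equilibrium_iff_aligned_general m g L₀ kc hL hk u hu α
end

section
/- Let u ∈ ℝ² with u ≠ u_crit and let α ∈ ℝ, ε ∈ {+1, −1} be such that u − u_crit = ε·L_u·n_α. Then the second partial derivative of the pendulum potential with respect to α satisfies ∂²W/∂α² (α, u) = ε·k_c·L₀·L_u. Consequently ∂²W/∂α² (α, u) > 0 (so α is a nondegenerate strict local minimum of W(·, u), i.e. a stable equilibrium) if and only if ε = +1, and ∂²W/∂α² (α, u) < 0 (unstable equilibrium) if and only if ε = −1. -/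
open Real

lemma pendW_hasDerivAt (m g L₀ kc : ℝ) (u : ℝ × ℝ) (γ : ℝ) :
    HasDerivAt (fun γ => pendW m g L₀ kc γ u)
      ((1 / 2) * m * g * L₀ * cos γ + kc * L₀ * (u.1 * sin γ - u.2 * cos γ)) γ := by
  have h : HasDerivAt (fun γ => pendW m g L₀ kc γ u)
      ((1 / 2) * m * g * L₀ * cos γ +
        (1 / 2) * kc * ((2 * (u.1 - L₀ * cos γ) * (L₀ * sin γ)) +
          (2 * (u.2 - L₀ * sin γ) * (-(L₀ * cos γ))))) γ := by
    unfold pendW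
    exact (((Real.hasDerivAt_sin γ).const_mul ((1 / 2) * m * g * L₀)).add
      ((((((Real.hasDerivAt_cos γ).const_mul L₀).const_sub u.1).pow 2).add
        ((((Real.hasDerivAt_sin γ).const_mul L₀).const_sub u.2).pow 2)).const_mul
        ((1 / 2) * kc))).congr_deriv (by ring)
  exact h.congr_deriv (by ring)

lemma pendW_deriv (m g L₀ kc : ℝ) (u : ℝ × ℝ) :
    (deriv (fun γ => pendW m g L₀ kc γ u)) = fun γ =>
      (1 / 2) * m * g * L₀ * cos γ + kc * L₀ * (u.1 * sin γ - u.2 * cos γ) := by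
  ext γ; exact (pendW_hasDerivAt m g L₀ kc u γ).deriv

/-- If `u ≠ u_crit` and `u - u_crit = ε L_u n_α` with
`ε ∈ {+1, -1}`, then `∂²W/∂α² (α, u) = ε k_c L₀ L_u`; it is positive (stable,
nondegenerate strict local minimum of `W(·, u)`) iff `ε = +1`, and negative
(unstable) iff `ε = -1`. -/
theorem pendulum_second_derivative_stability (m g L₀ kc : ℝ)
    (hm : 0 < m) (hg : 0 < g) (hL : 0 < L₀) (hk : 0 < kc)
    (u : ℝ × ℝ) (hu : u ≠ pendUcrit m g kc) (α : ℝ) (ε : ℝ)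
    (hε : ε = 1 ∨ ε = -1)
    (halign : u - pendUcrit m g kc = (ε * pendLu m g kc u) • pendN α) :
    deriv (fun β => deriv (fun γ => pendW m g L₀ kc γ u) β) α
      = ε * kc * L₀ * pendLu m g kc u ∧
    (0 < deriv (fun β => deriv (fun γ => pendW m g L₀ kc γ u) β) α ↔ ε = 1) ∧
    (deriv (fun β => deriv (fun γ => pendW m g L₀ kc γ u) β) α < 0 ↔ ε = -1) ∧
    (ε = 1 → ∀ᶠ β in nhdsWithin α {α}ᶜ,
      pendW m g L₀ kc α u < pendW m g L₀ kc β u) := by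
  set L := pendLu m g kc u with hLdef
  have hmg : m * g = 2 * kc * (m * g / (2 * kc)) := by field_simp
  -- coordinates of u
  have hu1 : u.1 = ε * L * cos α := by
    have := congrArg Prod.fst halign
    simpa [pendUcrit, pendN, Prod.smul_def, smul_eq_mul, mul_comm, mul_assoc] using this
  have hu2 : u.2 = m * g / (2 * kc) + ε * L * sin α := by
    have := congrArg Prod.snd halign
    simp [pendUcrit, pendN, Prod.smul_def, smul_eq_mul] at this
    linarith
  -- L > 0
  have hLpos : 0 < L := by
    have hne : u.1 ^ 2 + (u.2 - m * g / (2 * kc)) ^ 2 > 0 := by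
      rcases (by
        by_contra h
        push_neg at h
        exact hu (Prod.ext h.1 h.2) : u.1 ≠ 0 ∨ u.2 ≠ m * g / (2 * kc)) with h | h
      · positivity
      · have : u.2 - m * g / (2 * kc) ≠ 0 := sub_ne_zero.mpr h
        positivity
    exact Real.sqrt_pos.mpr hne
  have hsc := sin_sq_add_cos_sq α
  have hprod : 0 < kc * L₀ * L := by positivity
  -- second derivative value
  have hD2 : deriv (fun β => deriv (fun γ => pendW m g L₀ kc γ u) β) α
      = ε * kc * L₀ * L := by
    rw [pendW_deriv]
    have h : HasDerivAt (fun γ =>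
        (1 / 2) * m * g * L₀ * cos γ + kc * L₀ * (u.1 * sin γ - u.2 * cos γ))
        ((1 / 2) * m * g * L₀ * (-sin α) +
          kc * L₀ * (u.1 * cos α - u.2 * (-sin α))) α :=
      ((Real.hasDerivAt_cos α).const_mul ((1 / 2) * m * g * L₀)).add
        ((((Real.hasDerivAt_sin α).const_mul u.1).sub
          ((Real.hasDerivAt_cos α).const_mul u.2)).const_mul (kc * L₀))
    rw [h.deriv, hu1, hu2]
    linear_combination (kc * ε * L * L₀) * hsc - (1 / 2 * L₀ * sin α) * hmg
  refine ⟨hD2, ?_, ?_, ?_⟩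
  · rw [hD2]
    rcases hε with rfl | rfl
    · simp only [iff_true]; linarith
    · constructor
      · intro h; exfalso; linarith
      · intro h; norm_num at h
  · rw [hD2]
    rcases hε with rfl | rfl
    · constructor
      · intro h; exfalso; linarith
      · intro h; norm_num at h
    · simp only [iff_true]; linarith
  · rintro rfl
    have hdiff : ∀ β, pendW m g L₀ kc β u - pendW m g L₀ kc α u
        = kc * L₀ * L * (1 - cos (β - α)) := by
      intro β
      have hscβ := sin_sq_add_cos_sq β
      rw [Real.cos_sub]
      unfold pendW
      rw [hu1, hu2]
      linear_combination (1 / 2 * L₀ * (sin β - sin α)) * hmg +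
        (kc / 2 * L₀ ^ 2) * hscβ + (kc * L * L₀ - kc / 2 * L₀ ^ 2) * hsc
    rw [eventually_nhdsWithin_iff]
    filter_upwards [Metric.ball_mem_nhds α Real.two_pi_pos] with β hβ hβne
    have hβα : β - α ≠ 0 := sub_ne_zero.mpr (by simpa using hβne)
    have hball : |β - α| < 2 * π := by
      simpa [Real.dist_eq] using hβ
    have hcos : cos (β - α) < 1 := by
      refine lt_of_le_of_ne (Real.cos_le_one _) ?_
      intro h
      exact hβα ((Real.cos_eq_one_iff_of_lt_of_lt (by cases abs_lt.mp hball; linarith)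
        (by cases abs_lt.mp hball; linarith)).mp h)
    have hlt : 0 < pendW m g L₀ kc β u - pendW m g L₀ kc α u := by
      rw [hdiff β]
      have h1 : (0:ℝ) < 1 - cos (β - α) := by linarith
      positivity
    linarith
end

section
/- Let α ∈ ℝ, L > 0, and let u = (u_x, u_y) = u_crit + L·n_α (a stable, aligned equilibrium configuration). Then the total potential at this equilibrium equals W(α, u) = (1/2)·k_c·(L − L₀)² + (1/2)·m·g·u_y − (m·g)²/(8·k_c); i.e. the reduced potential is a quadratic function of the control length L plus a term linear in u_y plus a constant. -/
/-!
Write `u - L₀ n_α = u_crit + (L - L₀) n_α` and expand the square using `‖n_α‖ = 1`. Since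
`2 k_c u_crit = (0, m g)`, the cross term is `½ m g (L - L₀) sin α`; together with the
gravity term it gives `½ m g L sin α`, which is `½ m g u_y` up to a constant.
-/

open Real

lemma spring_sq_add_smul_pendN (p : ℝ × ℝ) (L L₀ α : ℝ) :
    ((p + L • pendN α).1 - L₀ * cos α) ^ 2 + ((p + L • pendN α).2 - L₀ * sin α) ^ 2
      = p.1 ^ 2 + p.2 ^ 2 + 2 * (L - L₀) * (p.1 * cos α + p.2 * sin α) + (L - L₀) ^ 2 := by
  simp only [pendN, Prod.fst_add, Prod.snd_add, Prod.smul_mk, smul_eq_mul]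
  linear_combination (L - L₀) ^ 2 * sin_sq_add_cos_sq α

/-- The spring force at `u_crit` balances gravity. -/
lemma two_mul_mul_pendUcrit_snd (m g : ℝ) {kc : ℝ} (hk : kc ≠ 0) :
    2 * kc * (pendUcrit m g kc).2 = m * g := by
  simp only [pendUcrit]
  field_simp

theorem pendulum_reduced_potential_general (m g L₀ kc : ℝ)
    (hk : 0 < kc)
    (α : ℝ) (L : ℝ) (u : ℝ × ℝ)
    (hu : u = pendUcrit m g kc + L • pendN α) :
    pendW m g L₀ kc α u
      = (1 / 2) * kc * (L - L₀) ^ 2 + (1 / 2) * m * g * u.2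
        - (m * g) ^ 2 / (8 * kc) := by
  subst hu
  set c := (pendUcrit m g kc).2 with hc
  have hbalance : m * g = 2 * kc * c := (two_mul_mul_pendUcrit_snd m g hk.ne').symm
  have hconst : (m * g) ^ 2 / (8 * kc) = kc * c ^ 2 / 2 := by
    rw [hbalance]
    field_simp
    ring
  have hc_fst : (pendUcrit m g kc).1 = 0 := rfl
  rw [pendW, spring_sq_add_smul_pendN, hc_fst, Prod.snd_add, ← hc, hconst]
  simp only [pendN, Prod.smul_mk, smul_eq_mul]
  linear_combination (L₀ * sin α - c - L * sin α) / 2 * hbalance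

/-- At a stable aligned equilibrium `u = u_crit + L n_α` with
`L > 0`, the reduced potential is
`W(α, u) = ½ k_c (L - L₀)² + ½ m g u_y - (m g)²/(8 k_c)`. -/
theorem pendulum_reduced_potential (m g L₀ kc : ℝ)
    (hm : 0 < m) (hg : 0 < g) (hL₀ : 0 < L₀) (hk : 0 < kc)
    (α : ℝ) (L : ℝ) (hL : 0 < L) (u : ℝ × ℝ)
    (hu : u = pendUcrit m g kc + L • pendN α) :
    pendW m g L₀ kc α u
      = (1 / 2) * kc * (L - L₀) ^ 2 + (1 / 2) * m * g * u.2
        - (m * g) ^ 2 / (8 * kc) :=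
  pendulum_reduced_potential_general m g L₀ kc hk α L u hu
end

section
/- Let α ∈ ℝ, L_u > 0, and u = u_crit + L_u·n_α (a stable equilibrium, so that ∂²W/∂α²(α, u) = k_c·L₀·L_u > 0). Then the control Hessian (Schur complement) G(α, u) := ∇²_uu W − ∇²_αu W · (∂²W/∂α²)⁻¹ · ∇²_uα W, evaluated at (α, u), equals the 2 × 2 matrix k_c·I₂ − k_c·(L₀/L_u)·n_α^⊥ (n_α^⊥)ᵀ; in particular G(α, u)·n_α = k_c·n_α and G(α, u)·n_α^⊥ = k_c·(1 − L₀/L_u)·n_α^⊥, so n_α and n_α^⊥ are eigenvectors with eigenvalues k_c and k_c·(1 − L₀/L_u) respectively. -/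
open Real Matrix

/-- The pendulum direction `n_α = (cos α, sin α)` (as a vector in `ℝ²`). -/
noncomputable def pendNvec (α : ℝ) : Fin 2 → ℝ := ![cos α, sin α]

/-- The perpendicular direction `n_α^⊥ = (-sin α, cos α)` (as a vector). -/
noncomputable def pendNperpVec (α : ℝ) : Fin 2 → ℝ := ![-sin α, cos α]

/-- The partial Hessian `∇²_uu W` of the pendulum potential, as a 2 × 2 matrix
of second partial derivatives in the control variables. -/
noncomputable def pendHuu (m g L₀ kc α : ℝ) (u : ℝ × ℝ) : Matrix (Fin 2) (Fin 2) ℝ :=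
  !![deriv (fun x => deriv (fun x' => pendW m g L₀ kc α (x', u.2)) x) u.1,
     deriv (fun y => deriv (fun x' => pendW m g L₀ kc α (x', y)) u.1) u.2;
     deriv (fun x => deriv (fun y' => pendW m g L₀ kc α (x, y')) u.2) u.1,
     deriv (fun y => deriv (fun y' => pendW m g L₀ kc α (u.1, y')) y) u.2]

/-- The mixed second derivative `∇²_uα W = ∇_u (∂W/∂α)` of the pendulum
potential, as a vector in `ℝ²`. -/
noncomputable def pendMixed (m g L₀ kc α : ℝ) (u : ℝ × ℝ) : Fin 2 → ℝ :=
  ![deriv (fun x => deriv (fun γ => pendW m g L₀ kc γ (x, u.2)) α) u.1,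
    deriv (fun y => deriv (fun γ => pendW m g L₀ kc γ (u.1, y)) α) u.2]

/-- The partial Hessian `∂²W/∂α²` of the pendulum potential. -/
noncomputable def pendWαα (m g L₀ kc α : ℝ) (u : ℝ × ℝ) : ℝ :=
  deriv (fun β => deriv (fun γ => pendW m g L₀ kc γ u) β) α

/-- The control Hessian (Schur complement)
`G(α, u) = ∇²_uu W - ∇²_αu W (∂²W/∂α²)⁻¹ ∇²_uα W` of the pendulum. -/
noncomputable def pendG (m g L₀ kc α : ℝ) (u : ℝ × ℝ) : Matrix (Fin 2) (Fin 2) ℝ :=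
  pendHuu m g L₀ kc α u -
    (pendWαα m g L₀ kc α u)⁻¹ •
      vecMulVec (pendMixed m g L₀ kc α u) (pendMixed m g L₀ kc α u)

/-!
All second derivatives of `W` are explicit: `∇²_uu W = k_c I`, `∇²_uα W = -k_c L₀ n_α^⊥` and
`∂²W/∂α² = -½ m g L₀ sin α + k_c L₀ ⟨u, n_α⟩`. At `u = u_crit + L_u n_α` the offset `u_crit`
cancels the gravity term exactly, so `∂²W/∂α² = k_c L₀ L_u`. The Schur complement is therefore
`k_c I` minus a rank-one term along the unit vector `n_α^⊥`, which is orthogonal to `n_α`.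
-/

theorem hasDerivAt_pendW_fst (m g L₀ kc α x y : ℝ) :
    HasDerivAt (fun x => pendW m g L₀ kc α (x, y)) (kc * (x - L₀ * cos α)) x := by
  have h := ((((hasDerivAt_id' x).sub_const (L₀ * cos α)).pow 2).add_const
    ((y - L₀ * sin α) ^ 2) |>.const_mul (1 / 2 * kc)).const_add (1 / 2 * m * g * L₀ * sin α)
  exact h.congr_deriv (by ring)

theorem hasDerivAt_pendW_snd (m g L₀ kc α x y : ℝ) :
    HasDerivAt (fun y => pendW m g L₀ kc α (x, y)) (kc * (y - L₀ * sin α)) y := by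
  have h := ((((hasDerivAt_id' y).sub_const (L₀ * sin α)).pow 2).const_add
    ((x - L₀ * cos α) ^ 2) |>.const_mul (1 / 2 * kc)).const_add (1 / 2 * m * g * L₀ * sin α)
  exact h.congr_deriv (by ring)

theorem deriv_pendW_fst (m g L₀ kc α y : ℝ) :
    deriv (fun x => pendW m g L₀ kc α (x, y)) = fun x => kc * (x - L₀ * cos α) :=
  funext fun x => (hasDerivAt_pendW_fst m g L₀ kc α x y).deriv

theorem deriv_pendW_snd (m g L₀ kc α x : ℝ) :
    deriv (fun y => pendW m g L₀ kc α (x, y)) = fun y => kc * (y - L₀ * sin α) :=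
  funext fun y => (hasDerivAt_pendW_snd m g L₀ kc α x y).deriv

theorem hasDerivAt_pendW_angle (m g L₀ kc γ : ℝ) (u : ℝ × ℝ) :
    HasDerivAt (fun γ => pendW m g L₀ kc γ u)
      (1 / 2 * m * g * L₀ * cos γ + kc * L₀ * (u.1 * sin γ - u.2 * cos γ)) γ := by
  have h := ((hasDerivAt_sin γ).const_mul (1 / 2 * m * g * L₀)).add
    (((((hasDerivAt_cos γ).const_mul L₀).const_sub u.1).pow 2).add
      ((((hasDerivAt_sin γ).const_mul L₀).const_sub u.2).pow 2) |>.const_mul (1 / 2 * kc))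
  exact h.congr_deriv (by ring)

theorem deriv_pendW_angle (m g L₀ kc : ℝ) (u : ℝ × ℝ) :
    deriv (fun γ => pendW m g L₀ kc γ u) =
      fun γ => 1 / 2 * m * g * L₀ * cos γ + kc * L₀ * (u.1 * sin γ - u.2 * cos γ) :=
  funext fun γ => (hasDerivAt_pendW_angle m g L₀ kc γ u).deriv

theorem pendHuu_eq (m g L₀ kc α : ℝ) (u : ℝ × ℝ) : pendHuu m g L₀ kc α u = kc • 1 := by
  ext i j
  fin_cases i <;> fin_cases j <;> simp [pendHuu, deriv_pendW_fst, deriv_pendW_snd]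

theorem pendMixed_eq (m g L₀ kc α : ℝ) (u : ℝ × ℝ) :
    pendMixed m g L₀ kc α u = -(kc * L₀) • pendNperpVec α := by
  ext i
  fin_cases i <;> simp [pendMixed, deriv_pendW_angle, pendNperpVec]

theorem pendWαα_eq (m g L₀ kc α : ℝ) (u : ℝ × ℝ) :
    pendWαα m g L₀ kc α u =
      -(1 / 2 * m * g * L₀ * sin α) + kc * L₀ * (u.1 * cos α + u.2 * sin α) := by
  have h := ((hasDerivAt_cos α).const_mul (1 / 2 * m * g * L₀)).add
    ((((hasDerivAt_sin α).const_mul u.1).sub ((hasDerivAt_cos α).const_mul u.2)).const_mul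
      (kc * L₀))
  rw [pendWαα, deriv_pendW_angle]
  exact (h.congr_deriv (by ring)).deriv

theorem pendWαα_equilibrium (m g L₀ kc α Lu : ℝ) (hk : kc ≠ 0) :
    pendWαα m g L₀ kc α (pendUcrit m g kc + Lu • (cos α, sin α)) = kc * L₀ * Lu := by
  rw [pendWαα_eq]
  simp only [pendUcrit, Prod.fst_add, Prod.snd_add, Prod.smul_fst, Prod.smul_snd, smul_eq_mul]
  field_simp
  linear_combination 2 * kc * L₀ * Lu * sin_sq_add_cos_sq α

theorem inv_mul_mul_sq_eq_div {K : Type*} [Field K] (a b : K) : (a * b)⁻¹ * a ^ 2 = a / b := by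
  linear_combination b⁻¹ * inv_mul_mul_self a

theorem pendG_equilibrium (m g L₀ kc α Lu : ℝ) (hk : kc ≠ 0) :
    pendG m g L₀ kc α (pendUcrit m g kc + Lu • (cos α, sin α))
      = kc • 1 - (kc * (L₀ / Lu)) • vecMulVec (pendNperpVec α) (pendNperpVec α) := by
  rw [pendG, pendHuu_eq, pendMixed_eq, pendWαα_equilibrium m g L₀ kc α Lu hk, smul_vecMulVec,
    vecMulVec_smul, smul_smul, smul_smul, mul_assoc, neg_mul_neg, ← sq, inv_mul_mul_sq_eq_div,
    mul_div_assoc]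

theorem smul_one_sub_smul_vecMulVec_mulVec {n R : Type*} [Fintype n] [DecidableEq n] [CommRing R]
    (c d : R) (w v : n → R) :
    (c • 1 - d • vecMulVec w w) *ᵥ v = c • v - (d * (w ⬝ᵥ v)) • w := by
  rw [sub_mulVec, smul_mulVec, smul_mulVec, one_mulVec, vecMulVec_mulVec, op_smul_eq_smul,
    smul_smul]

theorem pendNperpVec_dotProduct_pendNvec (α : ℝ) : pendNperpVec α ⬝ᵥ pendNvec α = 0 := by
  simp [pendNperpVec, pendNvec, dotProduct, mul_comm]

theorem pendNperpVec_dotProduct_self (α : ℝ) : pendNperpVec α ⬝ᵥ pendNperpVec α = 1 := by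
  simp [pendNperpVec, dotProduct, Fin.sum_univ_two, ← sq]

theorem pendulum_control_hessian_general (m g L₀ kc : ℝ)
    (hk : 0 < kc)
    (α : ℝ) (Lu : ℝ) (u : ℝ × ℝ)
    (hu : u = pendUcrit m g kc + Lu • (cos α, sin α)) :
    pendG m g L₀ kc α u
      = kc • (1 : Matrix (Fin 2) (Fin 2) ℝ)
        - (kc * (L₀ / Lu)) • vecMulVec (pendNperpVec α) (pendNperpVec α) ∧
    (pendG m g L₀ kc α u).mulVec (pendNvec α) = kc • pendNvec α ∧
    (pendG m g L₀ kc α u).mulVec (pendNperpVec α)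
      = (kc * (1 - L₀ / Lu)) • pendNperpVec α := by
  subst hu
  have hG := pendG_equilibrium m g L₀ kc α Lu hk.ne'
  refine ⟨hG, ?_, ?_⟩
  · rw [hG, smul_one_sub_smul_vecMulVec_mulVec, pendNperpVec_dotProduct_pendNvec]
    simp
  · rw [hG, smul_one_sub_smul_vecMulVec_mulVec, pendNperpVec_dotProduct_self]
    module

/-- At a stable aligned equilibrium `u = u_crit + L_u n_α`
(`L_u > 0`), the control Hessian equals
`k_c I₂ - k_c (L₀/L_u) n_α^⊥ (n_α^⊥)ᵀ`; in particular `n_α` and `n_α^⊥` are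
eigenvectors with eigenvalues `k_c` and `k_c (1 - L₀/L_u)`. -/
theorem pendulum_control_hessian (m g L₀ kc : ℝ)
    (hm : 0 < m) (hg : 0 < g) (hL₀ : 0 < L₀) (hk : 0 < kc)
    (α : ℝ) (Lu : ℝ) (hLu : 0 < Lu) (u : ℝ × ℝ)
    (hu : u = pendUcrit m g kc + Lu • (cos α, sin α)) :
    pendG m g L₀ kc α u
      = kc • (1 : Matrix (Fin 2) (Fin 2) ℝ)
        - (kc * (L₀ / Lu)) • vecMulVec (pendNperpVec α) (pendNperpVec α) ∧
    (pendG m g L₀ kc α u).mulVec (pendNvec α) = kc • pendNvec α ∧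
    (pendG m g L₀ kc α u).mulVec (pendNperpVec α)
      = (kc * (1 - L₀ / Lu)) • pendNperpVec α :=
  pendulum_control_hessian_general m g L₀ kc hk α Lu u hu
end
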